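/- The category of finite structures over a one-function-symbol signature has no finite dense subcategory: in the category of finite sets equipped with an endofunction (with morphisms the equivariant maps), the cyclic structures Z_n = ({0,...,n−1}, successor mod n) form an infinite family of pairwise non-isomorphic objects such that for m ≠ n there is no morphism from Z_m to Z_n unless n divides m; in particular, for n prime and m < n, Z_n admits no morphism from any structure of size less than n, hence no morphism from any object of a fixed finite set of objects of bounded size for n large enough, so no finite full subcategory is dense. -/

import Mathlib

open CategoryTheory Limits

/-- A finite structure for a signature with a single unary function symbol: a finite set
equipped with an endofunction. -/
structure FinEndo where
  carrier : Type
  [fin : Fintype carrier]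
  f : carrier → carrier

attribute [instance] FinEndo.fin

/-- Morphisms of `FinEndo` are equivariant maps `h` with `h ∘ f = g ∘ h`. -/
instance : Category FinEndo where
  Hom X Y := {h : X.carrier → Y.carrier // h ∘ X.f = Y.f ∘ h}
  id X := ⟨id, rfl⟩
  comp {X Y Z} u v := ⟨v.1 ∘ u.1, by
    funext x
    simp only [Function.comp_apply]
    rw [show u.1 (X.f x) = Y.f (u.1 x) from congrFun u.2 x,
      show v.1 (Y.f (u.1 x)) = Z.f (v.1 (u.1 x)) from congrFun v.2 (u.1 x)]⟩
  id_comp u := rfl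
  comp_id u := rfl
  assoc u v w := rfl

/-- The canonical cocone on the diagram of all morphisms from objects of the subcategory
(along `ι`) into `X`, with apex `X`. -/
@[simps]
def canonicalCocone {C : Type*} [Category C] {G : Type*} [Category G]
    (ι : G ⥤ C) (X : C) : Cocone (CostructuredArrow.proj ι X ⋙ ι) where
  pt := X
  ι := { app := fun g => g.hom
         naturality := fun _ _ f => (CostructuredArrow.w f).trans (Category.comp_id _).symm }

/-- `ι` is dense if every object is the colimit of the canonical diagram of morphisms from
objects of the subcategory into it. -/
def IsDense {C : Type*} [Category C] {G : Type*} [Category G] (ι : G ⥤ C) : Prop :=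
  ∀ X : C, Nonempty (IsColimit (canonicalCocone ι X))

/-!
For `n` beyond the sizes of the objects of a finite subcategory, the cyclic structure
`Z_n` is a single orbit, so every equivariant map from a nonempty structure into it is
surjective; hence only empty structures map to `Z_n`. The canonical diagram of `Z_n` then
consists of empty structures and has a cocone to the empty structure, which `Z_n` cannot map to.
-/

theorem Function.Semiconj.surjective_of_forall_exists_iterate_eq {α β : Type*} [Nonempty α]
    {h : α → β} {fa : α → α} {fb : β → β} (hh : Function.Semiconj h fa fb)
    (hfb : ∀ a b : β, ∃ k, fb^[k] a = b) : Function.Surjective h := by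
  intro b
  obtain ⟨x⟩ := ‹Nonempty α›
  obtain ⟨k, hk⟩ := hfb (h x) b
  exact ⟨fa^[k] x, (hh.iterate_right k x).trans hk⟩

theorem ZMod.exists_add_one_iterate_eq {n : ℕ} [NeZero n] (a b : ZMod n) :
    ∃ k, (· + 1)^[k] a = b :=
  ⟨(b - a).val, by rw [add_right_iterate_apply, nsmul_one, ZMod.natCast_zmod_val]; abel⟩

namespace FinEndo

def cyclic (n : ℕ) [NeZero n] : FinEndo where
  carrier := ZMod n
  f := (· + 1)

def empty : FinEndo where
  carrier := Empty
  f := id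

theorem hom_semiconj {X Y : FinEndo} (h : X ⟶ Y) : Function.Semiconj h.1 X.f Y.f :=
  fun x => congrFun h.2 x

theorem card_le_of_hom_cyclic {X : FinEndo} [Nonempty X.carrier] {n : ℕ} [NeZero n]
    (h : X ⟶ cyclic n) : n ≤ Fintype.card X.carrier := by
  have hsurj := (hom_semiconj h).surjective_of_forall_exists_iterate_eq
    ZMod.exists_add_one_iterate_eq
  exact (ZMod.card n).symm.trans_le (Fintype.card_le_of_surjective h.1 hsurj)

instance {X Y : FinEndo} [IsEmpty X.carrier] : Subsingleton (X ⟶ Y) :=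
  ⟨fun _ _ => Subtype.ext (funext isEmptyElim)⟩

def homOfIsEmpty (X Y : FinEndo) [IsEmpty X.carrier] : X ⟶ Y :=
  ⟨isEmptyElim, funext isEmptyElim⟩

theorem isEmpty_of_isColimit {J : Type*} [Category J] {F : J ⥤ FinEndo} {c : Cocone F}
    (hc : IsColimit c) (hF : ∀ j, IsEmpty (F.obj j).carrier) : IsEmpty c.pt.carrier :=
  let toEmpty : Cocone F :=
    { pt := empty
      ι := { app := fun j => have := hF j; homOfIsEmpty _ _
             naturality := fun _ _ _ => Subsingleton.elim _ _ } }
  ⟨fun x => ((hc.desc toEmpty).1 x).elim⟩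

end FinEndo

open FinEndo in
/-- The category of finite sets with an endofunction has no finite dense full subcategory:
no full subcategory on a finite collection of objects is dense, because for a large prime
`n` the cyclic structure `Z_n` receives no morphism from any nonempty structure of smaller
size. -/
theorem finEndo_no_finite_dense_subcategory (P : FinEndo → Prop)
    (hfin : {X : FinEndo | P X}.Finite) :
    ¬ IsDense (ObjectProperty.ι P) := by
  intro hdense
  obtain ⟨N, hN⟩ := (hfin.image fun X : FinEndo => Fintype.card X.carrier).bddAbove
  have hempty : IsEmpty (cyclic (N + 1)).carrier := by
    refine isEmpty_of_isColimit (hdense _).some fun j => ?_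
    rw [← not_nonempty_iff]
    intro (_ : Nonempty ((ObjectProperty.ι P).obj j.left).carrier)
    have hlarge := card_le_of_hom_cyclic j.hom
    have hsmall : Fintype.card ((ObjectProperty.ι P).obj j.left).carrier ≤ N :=
      hN ⟨_, j.left.property, rfl⟩
    omega
  exact hempty.elim (0 : ZMod (N + 1))
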